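/- For all integers j ≥ 1 and k ≥ 1, ν_3(b(j,k)) ≥ j+1+⌊(9k−9)/2⌋; equivalently, 3^{j+1+⌊(9k−9)/2⌋} divides b(j,k). -/

import Mathlib

/-- The matrix `m(i,j)` of Hirschhorn: `m(i,j) = 0` whenever `i = 0` or `j = 0`
(corresponding to nonpositive indices), `m(1,1) = 9`, `m(2,1) = 6`, `m(3,1) = 1`,
`m(i,1) = 0` for `i ≥ 4`, and for `j ≥ 2`,
`m(i,j) = 27·m(i-1,j-1) + 9·m(i-2,j-1) + m(i-3,j-1)`
(truncated subtraction correctly yields the prescribed value `0` at nonpositive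
first arguments). -/
def mCoef : ℕ → ℕ → ℤ
  | _, 0 => 0
  | 0, _ => 0
  | 1, 1 => 9
  | 2, 1 => 6
  | 3, 1 => 1
  | _ + 4, 1 => 0
  | i, j + 2 => 27 * mCoef (i - 1) (j + 1) + 9 * mCoef (i - 2) (j + 1) + mCoef (i - 3) (j + 1)

/-- The matrix `b(j,k)`: `b(1,1) = 9`, `b(1,k) = 0` for `k ≥ 2`, and
`b(j+1,k) = ∑_{i≥1} b(j,i)·m(4i+1,i+k)`.  All terms with `i > 3k + 3` vanish
(since `m(i',j') = 0` unless `⌊(i'+2)/3⌋ ≤ j'`), so the sum may be truncated there. -/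
def bCoef : ℕ → ℕ → ℤ
  | 1, 1 => 9
  | j + 2, k => ∑ i ∈ Finset.Icc 1 (3 * k + 3), bCoef (j + 1) i * mCoef (4 * i + 1) (i + k)
  | _, _ => 0

/-!
Induction on `j` in the recurrence for `m` shows that `m(i,j)` vanishes for `i > 3j` and is
divisible by `3 ^ ⌊(9j - 3i - 1)/2⌋` for `i < 3j`. In `b(j+1,k) = ∑ b(j,i) m(4i+1, i+k)` the terms
with `i ≥ 3k` therefore vanish, while for `1 ≤ i < 3k` the bound `⌊(9k - 3i - 4)/2⌋` on the
valuation of `m(4i+1, i+k)`, added to the inductive bound `j + 1 + ⌊(9i - 9)/2⌋` for `b(j,i)`,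
is at least `j + 2 + ⌊(9k - 9)/2⌋`.
-/

lemma pow_dvd_mul_of_le_add {M : Type*} [CommMonoid M] {p x y : M} {a b e : ℕ}
    (hx : p ^ a ∣ x) (hy : p ^ b ∣ y) (he : e ≤ a + b) : p ^ e ∣ x * y :=
  (pow_dvd_pow p he).trans (pow_add p a b ▸ mul_dvd_mul hx hy)

lemma mCoef_zero_left (j : ℕ) : mCoef 0 j = 0 := by
  cases j <;> simp [mCoef]

lemma mCoef_add_two (i j : ℕ) :
    mCoef i (j + 2) = 27 * mCoef (i - 1) (j + 1) + 9 * mCoef (i - 2) (j + 1) +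
      mCoef (i - 3) (j + 1) := by
  cases i <;> simp [mCoef]

lemma mCoef_eq_zero_of_lt : ∀ {i j : ℕ}, 3 * j < i → mCoef i j = 0
  | i, 0, _ => by cases i <;> simp [mCoef]
  | i + 4, 1, _ => by simp [mCoef]
  | i, j + 2, h => by
      rw [mCoef_add_two, mCoef_eq_zero_of_lt (by omega), mCoef_eq_zero_of_lt (by omega),
        mCoef_eq_zero_of_lt (by omega)]
      ring

def mCoefExp (i j : ℕ) : ℕ := (9 * j - 3 * i - 1) / 2

/-- When `i ≤ c` the truncated index `i - c` is `0`, where `m` vanishes. -/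
lemma pow_mCoefExp_dvd_term {i j c a : ℕ}
    (ih : (3 : ℤ) ^ mCoefExp (i - c) j ∣ mCoef (i - c) j)
    (he : c < i → mCoefExp i (j + 1) ≤ a + mCoefExp (i - c) j) :
    (3 : ℤ) ^ mCoefExp i (j + 1) ∣ 3 ^ a * mCoef (i - c) j := by
  rcases lt_or_ge c i with hi | hi
  · exact pow_dvd_mul_of_le_add dvd_rfl ih (he hi)
  · rw [Nat.sub_eq_zero_of_le hi, mCoef_zero_left, mul_zero]
    exact dvd_zero _

lemma pow_mCoefExp_dvd_mCoef : ∀ (i j : ℕ), (3 : ℤ) ^ mCoefExp i j ∣ mCoef i j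
  | i, 0 => by cases i <;> simp [mCoef]
  | i, 1 => by
      rcases lt_or_ge 3 i with hi | hi
      · rw [mCoef_eq_zero_of_lt (by omega)]
        exact dvd_zero _
      · interval_cases i <;> norm_num [mCoef, mCoefExp]
  | i, j + 2 => by
      rw [mCoef_add_two, show (27 : ℤ) = 3 ^ 3 by norm_num, show (9 : ℤ) = 3 ^ 2 by norm_num,
        ← one_mul (mCoef (i - 3) (j + 1)), ← pow_zero (3 : ℤ)]
      refine dvd_add (dvd_add ?_ ?_) ?_ <;>
        refine pow_mCoefExp_dvd_term (pow_mCoefExp_dvd_mCoef _ _) ?_ <;>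
        (intro; unfold mCoefExp; omega)

lemma bCoef_add_two (j k : ℕ) :
    bCoef (j + 2) k =
      ∑ i ∈ Finset.Icc 1 (3 * k + 3), bCoef (j + 1) i * mCoef (4 * i + 1) (i + k) := by
  simp [bCoef]

lemma pow_dvd_bCoef_mul_mCoef {j i k : ℕ} (hi : 1 ≤ i)
    (hb : (3 : ℤ) ^ (j + 1 + (9 * i - 9) / 2) ∣ bCoef j i) :
    (3 : ℤ) ^ (j + 2 + (9 * k - 9) / 2) ∣ bCoef j i * mCoef (4 * i + 1) (i + k) := by
  rcases lt_or_ge i (3 * k) with hik | hik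
  · refine pow_dvd_mul_of_le_add hb (pow_mCoefExp_dvd_mCoef _ _) ?_
    unfold mCoefExp
    rcases Nat.even_or_odd i with ⟨x, rfl⟩ | ⟨x, rfl⟩ <;> omega
  · rw [mCoef_eq_zero_of_lt (by omega), mul_zero]
    exact dvd_zero _

theorem bCoef_three_adic_bound_general (j k : ℕ) :
    (3 : ℤ) ^ (j + 1 + (9 * k - 9) / 2) ∣ bCoef j k := by
  induction j generalizing k with
  | zero => simp [bCoef]
  | succ j ih =>
    cases j with
    | zero => rcases k with _ | _ | k <;> norm_num [bCoef]
    | succ j =>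
      rw [bCoef_add_two]
      exact Finset.dvd_sum fun i hi ↦
        pow_dvd_bCoef_mul_mCoef (Finset.mem_Icc.mp hi).1 (ih i)

/-- `ν₃(b(j,k)) ≥ j + 1 + ⌊(9k-9)/2⌋` for `j, k ≥ 1`: equivalently,
`3 ^ (j + 1 + ⌊(9k-9)/2⌋)` divides `b(j,k)` (for `k ≥ 1` the quantity `9k - 9` is
nonnegative, so the floor is the natural-number division `(9k - 9)/2`). -/
theorem bCoef_three_adic_bound (j k : ℕ) (hj : 1 ≤ j) (hk : 1 ≤ k) :
    (3 : ℤ) ^ (j + 1 + (9 * k - 9) / 2) ∣ bCoef j k :=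
  bCoef_three_adic_bound_general j k
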